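/- Let Γ be a finitely generated group and κ an algebraically closed field of characteristic zero. Let ρ₁ : Γ →* GL(V₁) and ρ₂ : Γ →* GL(V₂) be representations of Γ on finite-dimensional κ-vector spaces V₁, V₂ that are semisimple (i.e. V₁ and V₂ are semisimple as modules over the group algebra κ[Γ]). Then ρ₁ and ρ₂ are isomorphic — there exists a κ-linear isomorphism φ : V₁ ≃ V₂ such that φ ∘ ρ₁(g) = ρ₂(g) ∘ φ for all g ∈ Γ — if and only if their characters agree, i.e. tr(ρ₁(g)) = tr(ρ₂(g)) for every g ∈ Γ. -/

import Mathlib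

/-!
Write `A = κ[Γ]`. In the semisimple module `M × N` the `S`-isotypic component of a simple module
`S` has a fully invariant complement, so the projection onto it commutes with `End_A (M × N)` and,
by the Jacobson density theorem, is the action of some `a : A`. This `a` acts on `M` and on `N` as
the projection onto their `S`-isotypic components, so in characteristic zero equal characters force
these components to have equal dimension. Hence every simple submodule of `M` also occurs in `N`;
split it off on both sides and induct on the dimension.
-/

open Module LinearMap

instance IsSemisimpleModule.prod {R M N : Type*} [Ring R] [AddCommGroup M] [Module R M]
    [AddCommGroup N] [Module R N] [IsSemisimpleModule R M] [IsSemisimpleModule R N] :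
    IsSemisimpleModule R (M × N) := by
  have := IsSemisimpleModule.sup (.range (inl R M N)) (.range (inr R M N))
  rw [LinearMap.sup_range_inl_inr] at this
  exact .congr Submodule.topEquiv.symm

theorem Submodule.IsFullyInvariant.exists_isCompl {R M : Type*} [Ring R] [AddCommGroup M]
    [Module R M] [IsSemisimpleModule R M] {P : Submodule R M} (hP : P.IsFullyInvariant) :
    ∃ T : Submodule R M, T.IsFullyInvariant ∧ IsCompl P T :=
  have := (OrderIso.setIsotypicComponents (R := R) (M := M)).complementedLattice
  CompleteSublattice.isComplemented_iff.mp this P hP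

theorem Submodule.commute_projection_of_isFullyInvariant {R M : Type*} [Ring R] [AddCommGroup M]
    [Module R M] {P T : Submodule R M} (hP : P.IsFullyInvariant) (hT : T.IsFullyInvariant)
    (hPT : IsCompl P T) (f : End R M) : Commute (P.projection T hPT) f := by
  rw [(isIdempotentElem_projection hPT).commute_iff, range_projection, ker_projection]
  exact ⟨hP f, hT f⟩

theorem exists_smul_eq_of_forall_commute {A W : Type*} [Ring A] [AddCommGroup W] [Module A W]
    [IsSemisimpleModule A W] [Module.Finite (End A W) W] (e : End A W)
    (he : ∀ f : End A W, Commute e f) : ∃ a : A, ∀ x, a • x = e x := by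
  let e' : End (End A W) W :=
    { toFun := e, map_add' := e.map_add, map_smul' := fun f x => LinearMap.congr_fun (he f) x }
  obtain ⟨a, ha⟩ := Module.Finite.toModuleEnd_moduleEnd_surjective e'
  exact ⟨a, fun x => LinearMap.congr_fun ha x⟩

instance Submodule.finiteDimensional_of_isScalarTower {κ A M : Type*} [Field κ] [Ring A]
    [Algebra κ A] [AddCommGroup M] [Module κ M] [Module A M] [IsScalarTower κ A M]
    [FiniteDimensional κ M] (p : Submodule A M) : FiniteDimensional κ p :=
  inferInstanceAs (FiniteDimensional κ (p.restrictScalars κ))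

namespace Module

variable {κ A W M N : Type*} [Field κ] [Ring A] [Algebra κ A]
  [AddCommGroup W] [Module κ W] [Module A W] [IsScalarTower κ A W]
  [AddCommGroup M] [Module κ M] [Module A M] [IsScalarTower κ A M]
  [AddCommGroup N] [Module κ N] [Module A N] [IsScalarTower κ A N]

variable (κ M) in
noncomputable def character (a : A) : κ := trace κ M (toModuleEnd κ M a)

theorem character_one [FiniteDimensional κ M] : character κ M (1 : A) = finrank κ M := by
  rw [character, map_one, trace_one]

theorem character_congr (e : M ≃ₗ[A] N) (a : A) : character κ M a = character κ N a := by
  rw [character, character, ← trace_conj' (toModuleEnd κ M a) (e.restrictScalars κ)]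
  congr 1
  ext x
  simp [LinearEquiv.conj_apply]

theorem character_prod [FiniteDimensional κ M] [FiniteDimensional κ N] (a : A) :
    character κ (M × N) a = character κ M a + character κ N a := by
  rw [character, character, character, ← trace_prodMap']
  rfl

theorem character_eq_add_of_isCompl [FiniteDimensional κ M] {p q : Submodule A M}
    (hpq : IsCompl p q) (a : A) : character κ M a = character κ p a + character κ q a := by
  rw [← character_congr (p.prodEquivOfIsCompl q hpq), character_prod]

variable (κ) in
theorem exists_isProj_toModuleEnd_of_isFullyInvariant [FiniteDimensional κ W]
    [IsSemisimpleModule A W] {P : Submodule A W} (hP : P.IsFullyInvariant) :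
    ∃ a : A, IsProj (P.restrictScalars κ) (toModuleEnd κ W a) := by
  obtain ⟨T, hT, hPT⟩ := hP.exists_isCompl
  have : Module.Finite (End A W) W := .of_restrictScalars_finite κ _ _
  obtain ⟨a, ha⟩ := exists_smul_eq_of_forall_commute (P.projection T hPT)
    (Submodule.commute_projection_of_isFullyInvariant hP hT hPT)
  refine ⟨a, fun x => ?_, fun x hx => ?_⟩
  · simp [ha, Submodule.projection_apply_mem]
  · simp [ha, Submodule.projection_apply_of_mem_left hPT hx]

theorem isProj_toModuleEnd_isotypicComponent_of_retraction {S : Type*} [AddCommGroup S]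
    [Module A S] [IsSimpleModule A S] {a : A}
    (h : IsProj ((isotypicComponent A W S).restrictScalars κ) (toModuleEnd κ W a))
    (i : M →ₗ[A] W) (r : W →ₗ[A] M) (hri : ∀ x, r (i x) = x) :
    IsProj ((isotypicComponent A M S).restrictScalars κ) (toModuleEnd κ M a) := by
  have hsmul (x : M) : a • x = r (a • i x) := by rw [map_smul, hri]
  constructor
  · intro x
    show a • x ∈ _
    rw [hsmul]
    exact r.le_comap_isotypicComponent S (h.map_mem (i x))
  · intro x hx
    show a • x = x
    rw [hsmul]
    exact (congrArg r (h.map_id (i x) (i.le_comap_isotypicComponent S hx))).trans (hri x)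

variable [CharZero κ] [FiniteDimensional κ M] [FiniteDimensional κ N]

theorem finrank_eq_of_character_eq (h : ∀ a : A, character κ M a = character κ N a) :
    finrank κ M = finrank κ N := by
  exact_mod_cast character_one.symm.trans ((h 1).trans character_one)

variable [IsSemisimpleModule A M] [IsSemisimpleModule A N]

theorem finrank_isotypicComponent_eq_of_character_eq
    (h : ∀ a : A, character κ M a = character κ N a)
    (S : Type*) [AddCommGroup S] [Module A S] [IsSimpleModule A S] :
    finrank κ (isotypicComponent A M S) = finrank κ (isotypicComponent A N S) := by
  obtain ⟨a, ha⟩ :=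
    exists_isProj_toModuleEnd_of_isFullyInvariant κ (.isotypicComponent A (M × N) S)
  have hM := isProj_toModuleEnd_isotypicComponent_of_retraction ha (inl A M N) (fst A M N)
    fun _ => rfl
  have hN := isProj_toModuleEnd_isotypicComponent_of_retraction ha (inr A M N) (snd A M N)
    fun _ => rfl
  have := h a
  rw [character, character, hM.trace, hN.trace] at this
  exact_mod_cast this

theorem exists_submodule_linearEquiv_of_character_eq (h : ∀ a : A, character κ M a = character κ N a)
    (S : Submodule A M) [IsSimpleModule A S] : ∃ T : Submodule A N, Nonempty (T ≃ₗ[A] S) := by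
  have hM : 0 < finrank κ (isotypicComponent A M S) := by
    rw [finrank_pos_iff, Submodule.nontrivial_iff_ne_bot]
    exact (bot_lt_isotypicComponent S).ne'
  rw [finrank_isotypicComponent_eq_of_character_eq h, finrank_pos_iff,
    Submodule.nontrivial_iff_ne_bot, isotypicComponent, Ne, sSup_eq_bot] at hM
  push Not at hM
  obtain ⟨T, hT, -⟩ := hM
  exact ⟨T, hT⟩

theorem nonempty_linearEquiv_of_character_eq (h : ∀ a : A, character κ M a = character κ N a) :
    Nonempty (M ≃ₗ[A] N) := by
  induction hn : finrank κ M using Nat.strong_induction_on generalizing M N with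
  | _ n ih =>
  rcases subsingleton_or_nontrivial M with hM | hM
  · have : Subsingleton N := by
      rw [← finrank_zero_iff (R := κ), ← finrank_eq_of_character_eq h, finrank_zero_iff]
      exact hM
    exact ⟨.ofSubsingleton M N⟩
  obtain ⟨S, hS⟩ := IsSemisimpleModule.exists_simple_submodule A M
  obtain ⟨T, ⟨eTS⟩⟩ := exists_submodule_linearEquiv_of_character_eq h S
  obtain ⟨M', hSM'⟩ := exists_isCompl S
  obtain ⟨N', hTN'⟩ := exists_isCompl T
  have h' (a : A) : character κ M' a = character κ N' a := by
    have := h a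
    rw [character_eq_add_of_isCompl hSM', character_eq_add_of_isCompl hTN',
      character_congr eTS] at this
    exact add_left_cancel this
  have hlt : finrank κ M' < n := by
    have := IsSimpleModule.nontrivial A S
    have hS : 0 < finrank κ S := finrank_pos
    have := ((S.prodEquivOfIsCompl M' hSM').restrictScalars κ).finrank_eq
    rw [finrank_prod] at this
    omega
  obtain ⟨e'⟩ := ih _ hlt h' rfl
  exact ⟨(S.prodEquivOfIsCompl M' hSM').symm ≪≫ₗ eTS.symm.prodCongr e' ≪≫ₗ
    T.prodEquivOfIsCompl N' hTN'⟩

end Module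

namespace Representation

variable {κ Γ V W : Type*} [Field κ] [Monoid Γ] [AddCommGroup V] [Module κ V]
  [AddCommGroup W] [Module κ W]

theorem character_asModule (ρ : Representation κ Γ V) (a : MonoidAlgebra κ Γ) :
    Module.character κ ρ.asModule a = trace κ V (ρ.asAlgebraHom a) := by
  rw [Module.character, ← trace_conj' _ ρ.asModuleEquiv]
  rfl

theorem character_asModule_eq_of_character_eq {ρ : Representation κ Γ V}
    {σ : Representation κ Γ W} (h : ρ.character = σ.character) (a : MonoidAlgebra κ Γ) :
    Module.character κ ρ.asModule a = Module.character κ σ.asModule a := by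
  simp only [character_asModule]
  induction a using MonoidAlgebra.induction_on with
  | of g => rw [asAlgebraHom_of, asAlgebraHom_of]; exact congr_fun h g
  | add a b ha hb => simp [ha, hb]
  | smul c a ha => simp [ha]

theorem nonempty_equiv_iff_character_eq [CharZero κ] [FiniteDimensional κ V]
    [FiniteDimensional κ W] {ρ : Representation κ Γ V} {σ : Representation κ Γ W}
    [IsSemisimpleModule (MonoidAlgebra κ Γ) ρ.asModule]
    [IsSemisimpleModule (MonoidAlgebra κ Γ) σ.asModule] :
    Nonempty (ρ.Equiv σ) ↔ ρ.character = σ.character := by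
  refine ⟨fun ⟨φ⟩ => char_iso φ, fun h => ?_⟩
  obtain ⟨e⟩ := nonempty_linearEquiv_of_character_eq (character_asModule_eq_of_character_eq h)
  refine ⟨.mk (ρ.asModuleEquiv.symm ≪≫ₗ e.restrictScalars κ ≪≫ₗ σ.asModuleEquiv) fun g => ?_⟩
  ext v
  show σ.asModuleEquiv (e (ρ.asModuleEquiv.symm (ρ g v))) = _
  rw [asModuleEquiv_symm_map_rho, map_smul, asModuleEquiv_map_smul, asAlgebraHom_of]
  rfl

end Representation

theorem stmt_0_general {κ : Type*} [Field κ] [CharZero κ]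
    {Γ : Type*} [Group Γ]
    {V₁ V₂ : Type*} [AddCommGroup V₁] [Module κ V₁] [FiniteDimensional κ V₁]
    [AddCommGroup V₂] [Module κ V₂] [FiniteDimensional κ V₂]
    (ρ₁ : Γ →* (V₁ ≃ₗ[κ] V₁)) (ρ₂ : Γ →* (V₂ ≃ₗ[κ] V₂))
    (h₁ : IsSemisimpleModule (MonoidAlgebra κ Γ) (Representation.asModule
      (LinearEquiv.automorphismGroup.toLinearMapMonoidHom.comp ρ₁ : Representation κ Γ V₁)))
    (h₂ : IsSemisimpleModule (MonoidAlgebra κ Γ) (Representation.asModule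
      (LinearEquiv.automorphismGroup.toLinearMapMonoidHom.comp ρ₂ : Representation κ Γ V₂))) :
    (∃ φ : V₁ ≃ₗ[κ] V₂, ∀ (g : Γ) (v : V₁), φ (ρ₁ g v) = ρ₂ g (φ v)) ↔
      ∀ g : Γ, LinearMap.trace κ V₁ (ρ₁ g : V₁ →ₗ[κ] V₁) =
        LinearMap.trace κ V₂ (ρ₂ g : V₂ →ₗ[κ] V₂) := by
  refine .trans ?_ ((Representation.nonempty_equiv_iff_character_eq
    (ρ := LinearEquiv.automorphismGroup.toLinearMapMonoidHom.comp ρ₁)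
    (σ := LinearEquiv.automorphismGroup.toLinearMapMonoidHom.comp ρ₂)).trans funext_iff)
  exact ⟨fun ⟨φ, hφ⟩ => ⟨.mk φ fun g => LinearMap.ext (hφ g)⟩,
    fun ⟨e⟩ => ⟨e.toLinearEquiv, e.isIntertwining⟩⟩

/-- Two finite-dimensional semisimple representations of a finitely generated group over an
algebraically closed field of characteristic zero are isomorphic if and only if their
characters (traces) agree. -/
theorem stmt_0 {κ : Type*} [Field κ] [IsAlgClosed κ] [CharZero κ]
    {Γ : Type*} [Group Γ] [Group.FG Γ]
    {V₁ V₂ : Type*} [AddCommGroup V₁] [Module κ V₁] [FiniteDimensional κ V₁]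
    [AddCommGroup V₂] [Module κ V₂] [FiniteDimensional κ V₂]
    (ρ₁ : Γ →* (V₁ ≃ₗ[κ] V₁)) (ρ₂ : Γ →* (V₂ ≃ₗ[κ] V₂))
    (h₁ : IsSemisimpleModule (MonoidAlgebra κ Γ) (Representation.asModule
      (LinearEquiv.automorphismGroup.toLinearMapMonoidHom.comp ρ₁ : Representation κ Γ V₁)))
    (h₂ : IsSemisimpleModule (MonoidAlgebra κ Γ) (Representation.asModule
      (LinearEquiv.automorphismGroup.toLinearMapMonoidHom.comp ρ₂ : Representation κ Γ V₂))) :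
    (∃ φ : V₁ ≃ₗ[κ] V₂, ∀ (g : Γ) (v : V₁), φ (ρ₁ g v) = ρ₂ g (φ v)) ↔
      ∀ g : Γ, LinearMap.trace κ V₁ (ρ₁ g : V₁ →ₗ[κ] V₁) =
        LinearMap.trace κ V₂ (ρ₂ g : V₂ →ₗ[κ] V₂) :=
  stmt_0_general ρ₁ ρ₂ h₁ h₂
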